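/- arXiv:1112.3441 — 12 statements merged into one kernel-verified Lean document; each statement's English description precedes it below -/
import Mathlib

section
/- The polynomial q = x² + y² + z² − xyz − 4 is irreducible in the polynomial ring ℂ[x,y,z]. -/
/-! As a monic quadratic in `x` over `ℂ[y,z]`, `q` becomes Eisenstein at the prime `y - 2` after
the shift `x ↦ x + z`: `q(x + z, y, z) = x² - (y - 2)z·x + (y - 2)(y + 2 - z²)`, and `y - 2` does not
divide `y + 2 - z²`, which takes the value `4` at `(y, z) = (2, 0)`. -/

open MvPolynomial

theorem MvPolynomial.prime_X_zero_sub_C {R : Type*} [CommRing R] [IsDomain R] (n : ℕ) (a : R) :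
    Prime (X 0 - C a : MvPolynomial (Fin (n + 1)) R) := by
  rw [← MulEquiv.prime_iff (finSuccEquiv R n), map_sub, finSuccEquiv_X_zero, ← algebraMap_eq,
    AlgEquiv.commutes, Polynomial.algebraMap_apply, algebraMap_eq]
  exact Polynomial.prime_X_sub_C (C a)

namespace Polynomial

theorem irreducible_X_sq_add_C_mul_X_add_C_mul_of_prime {R : Type*} [CommRing R] [IsDomain R]
    {p b s : R} (hp : Prime p) (hb : p ∣ b) (hs : ¬p ∣ s) :
    Irreducible (X ^ 2 + C b * X + C (p * s)) := by
  have hmonic : (X ^ 2 + C b * X + C (p * s)).Monic := by monicity!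
  have hdeg : (X ^ 2 + C b * X + C (p * s)).natDegree = 2 := by compute_degree!
  have hprime : (Ideal.span {p}).IsPrime := (Ideal.span_singleton_prime hp.ne_zero).2 hp
  refine (hmonic.isEisensteinAt_of_mem_of_notMem hprime.ne_top ?_ ?_).irreducible hprime
    hmonic.isPrimitive (by rw [hdeg]; norm_num)
  · intro n hn
    rw [hdeg] at hn
    interval_cases n <;> simp [coeff_X, coeff_C, Ideal.mem_span_singleton, hb]
  · rw [Ideal.span_singleton_pow, Ideal.mem_span_singleton, pow_two]
    simpa [coeff_X, coeff_C] using mt (mul_dvd_mul_iff_left hp.ne_zero).1 hs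

end Polynomial

/-- The polynomial `q = x² + y² + z² − xyz − 4` is irreducible in `ℂ[x,y,z]`. -/
theorem q_irreducible :
    Irreducible ((X 0) ^ 2 + (X 1) ^ 2 + (X 2) ^ 2 - X 0 * X 1 * X 2 - 4 :
      MvPolynomial (Fin 3) ℂ) := by
  have hshift : Polynomial.algEquivAevalXAddC (X 1) (finSuccEquiv ℂ 2
      ((X 0) ^ 2 + (X 1) ^ 2 + (X 2) ^ 2 - X 0 * X 1 * X 2 - 4)) =
      Polynomial.X ^ 2 + Polynomial.C ((X 0 - C 2) * -X 1) * Polynomial.X +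
        Polynomial.C ((X 0 - C 2) * (X 0 + 2 - X 1 ^ 2)) := by
    have hX1 : (X 1 : MvPolynomial (Fin 3) ℂ) = X (Fin.succ 0) := rfl
    have hX2 : (X 2 : MvPolynomial (Fin 3) ℂ) = X (Fin.succ 1) := rfl
    simp only [hX1, hX2, map_sub, map_add, map_mul, map_pow, map_neg, map_ofNat,
      finSuccEquiv_X_zero, finSuccEquiv_X_succ, Polynomial.algEquivAevalXAddC_apply,
      Polynomial.aeval_X, Polynomial.aeval_C, Polynomial.algebraMap_apply,
      Algebra.algebraMap_self, RingHom.id_apply]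
    ring
  have hs : ¬(X 0 - C 2 : MvPolynomial (Fin 2) ℂ) ∣ X 0 + 2 - X 1 ^ 2 := fun h => by
    simpa using map_dvd (eval ![2, 0]) h
  rw [← MulEquiv.irreducible_iff (finSuccEquiv ℂ 2),
    ← MulEquiv.irreducible_iff (Polynomial.algEquivAevalXAddC (X 1)), hshift]
  exact Polynomial.irreducible_X_sq_add_C_mul_X_add_C_mul_of_prime (prime_X_zero_sub_C 1 2)
    (dvd_mul_right _ _) hs
end

section
/- The polynomial p₀ = z³ − xyz² + (x² + y² − 2)z − xy is irreducible in the polynomial ring ℂ[x,y,z]. -/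
/-!
Over `ℂ[x,y]`, `p₀` is a monic cubic in `z`, so it is irreducible as soon as it has no root
`z = r(x,y)` in `ℂ[x,y]`. Such a root cannot exist because the surface `p₀ = 0` is not a graph over
the `(x,y)`-plane at `(0, √2, 0)`: there `∂p₀/∂z = 0` but `∂p₀/∂x = -√2`. Concretely,
`p₀(0, √2, z) = z³` forces `r(0, √2) = 0`, and then differentiating `p₀(x, y, r(x,y)) = 0` in `x`
at `(0, √2)` gives `-√2 = 0`.
-/

open MvPolynomial

noncomputable def p0 (K : Type*) [CommRing K] : MvPolynomial (Fin 3) K :=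
  X 2 ^ 3 - X 0 * X 1 * X 2 ^ 2 + (X 0 ^ 2 + X 1 ^ 2 - 2) * X 2 - X 0 * X 1

noncomputable def p0Cubic (K : Type*) [CommRing K] : Polynomial (MvPolynomial (Fin 2) K) :=
  Polynomial.X ^ 3 - Polynomial.C (X 0 * X 1) * Polynomial.X ^ 2 +
    Polynomial.C (X 0 ^ 2 + X 1 ^ 2 - 2) * Polynomial.X - Polynomial.C (X 0 * X 1)

section

variable {K : Type*} [CommRing K]

theorem p0Cubic_monic [Nontrivial K] : (p0Cubic K).Monic := by
  unfold p0Cubic; monicity!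

theorem p0Cubic_natDegree [Nontrivial K] : (p0Cubic K).natDegree = 3 := by
  unfold p0Cubic; compute_degree!

theorem p0Cubic_not_isRoot [IsDomain K] {c : K} (hc : c ^ 2 = 2) (hc0 : c ≠ 0)
    (r : MvPolynomial (Fin 2) K) : ¬ (p0Cubic K).IsRoot r := by
  intro hr
  replace hr : r ^ 3 - X 0 * X 1 * r ^ 2 + (X 0 ^ 2 + X 1 ^ 2 - 2) * r - X 0 * X 1 = 0 := by
    simpa [p0Cubic] using hr
  have hr0 : eval ![0, c] r = 0 := by
    simpa [hc] using congrArg (eval ![0, c]) hr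
  exact hc0 (by simpa [pderiv_X, hr0, hc] using congrArg (fun q ↦ eval ![0, c] (pderiv 0 q)) hr)

theorem p0Cubic_irreducible [IsDomain K] {c : K} (hc : c ^ 2 = 2) (hc0 : c ≠ 0) :
    Irreducible (p0Cubic K) := by
  rw [p0Cubic_monic.irreducible_iff_roots_eq_zero_of_degree_le_three
    (by simp [p0Cubic_natDegree]) p0Cubic_natDegree.le]
  exact Multiset.eq_zero_of_forall_notMem fun r hr ↦
    p0Cubic_not_isRoot hc hc0 r (Polynomial.isRoot_of_mem_roots hr)

variable (K) in
theorem finSuccEquiv_rename_swap_p0 :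
    finSuccEquiv K 2 (rename (Equiv.swap 0 2) (p0 K)) = p0Cubic K := by
  have hs0 : Equiv.swap (0 : Fin 3) 2 0 = Fin.succ 1 := rfl
  have hs1 : Equiv.swap (0 : Fin 3) 2 1 = Fin.succ 0 := rfl
  have hs2 : Equiv.swap (0 : Fin 3) 2 2 = 0 := rfl
  simp only [p0, p0Cubic, map_sub, map_add, map_mul, map_pow, map_ofNat, rename_X, hs0, hs1, hs2,
    finSuccEquiv_X_zero, finSuccEquiv_X_succ]
  ring

theorem p0_irreducible_of_sq_eq_two [IsDomain K] {c : K} (hc : c ^ 2 = 2) (hc0 : c ≠ 0) :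
    Irreducible (p0 K) := by
  rw [← MulEquiv.irreducible_iff ((renameEquiv K (Equiv.swap 0 2)).trans (finSuccEquiv K 2))]
  simpa [finSuccEquiv_rename_swap_p0] using p0Cubic_irreducible hc hc0

end

/-- The polynomial `p₀ = z³ − xyz² + (x² + y² − 2)z − xy` is irreducible in `ℂ[x,y,z]`. -/
theorem p0_irreducible :
    Irreducible ((X 2) ^ 3 - X 0 * X 1 * (X 2) ^ 2 +
      ((X 0) ^ 2 + (X 1) ^ 2 - 2) * X 2 - X 0 * X 1 :
      MvPolynomial (Fin 3) ℂ) := by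
  obtain ⟨c, hc⟩ := IsAlgClosed.exists_pow_nat_eq (2 : ℂ) two_pos
  exact p0_irreducible_of_sq_eq_two hc (by rintro rfl; norm_num at hc)
end

section
/- The polynomial p₁ = z⁴ − xyz³ + (x² + y² − 3)z² − xyz + 1 is irreducible in the polynomial ring ℂ[x,y,z]. -/
/-!
As a polynomial in `z` over `ℂ[x, y]`, `p₁` is monic, so it is irreducible as soon as its
specialisation at `y = 0`, `z⁴ + (x² − 3)z² + 1 ∈ ℂ[x][z]`, is. Read as a polynomial in `x` over
`ℂ[z]`, that specialisation is `z²·x² + (z⁴ − 3z² + 1)`, which is Eisenstein at `z − a` for any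
root `a` of the separable quartic `z⁴ − 3z² + 1`; the coefficients are coprime because the quartic
does not vanish at `0`.
-/

open Polynomial

namespace Polynomial

variable {R : Type*} [CommRing R]

theorem isPrimitive_C_mul_X_pow_add_C {u c : R} (huc : IsCoprime u c) {n : ℕ} (hn : n ≠ 0) :
    (C u * X ^ n + C c).IsPrimitive := by
  intro r hr
  rw [C_dvd_iff_dvd_coeff] at hr
  have hu := hr n
  have hc := hr 0
  simp only [coeff_add, coeff_C_mul_X_pow, coeff_C, if_true, if_neg hn, add_zero] at hu
  simp only [coeff_add, coeff_C_mul_X_pow, coeff_C, if_true, if_neg (Ne.symm hn), zero_add] at hc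
  exact huc.isUnit_of_dvd' hu hc

theorem irreducible_C_mul_X_pow_add_C_of_eisenstein [IsDomain R] {P : Ideal R} (hP : P.IsPrime)
    {u c : R} (hu : u ∉ P) (hc : c ∈ P) (hc2 : c ∉ P ^ 2) (huc : IsCoprime u c) {n : ℕ}
    (hn : n ≠ 0) : Irreducible (C u * X ^ n + C c) := by
  have hu0 : u ≠ 0 := fun h => hu (h ▸ P.zero_mem)
  have hdeg : (C u * X ^ n + C c).degree = (n : WithBot ℕ) := by
    rw [degree_add_eq_left_of_degree_lt] <;> rw [degree_C_mul_X_pow n hu0]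
    exact degree_C_le.trans_lt (by exact_mod_cast Nat.pos_of_ne_zero hn)
  refine irreducible_of_eisenstein_criterion hP ?_ ?_ ?_ ?_ (isPrimitive_C_mul_X_pow_add_C huc hn)
  · rwa [leadingCoeff, natDegree_eq_of_degree_eq_some hdeg, coeff_add, coeff_C_mul_X_pow,
      if_pos rfl, coeff_C, if_neg hn, add_zero]
  · intro k hk
    rw [hdeg, Nat.cast_lt] at hk
    simp only [coeff_add, coeff_C_mul_X_pow, coeff_C, if_neg hk.ne, zero_add]
    split_ifs
    · exact hc
    · exact P.zero_mem
  · rw [hdeg]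
    exact_mod_cast Nat.pos_of_ne_zero hn
  · simpa [coeff_C_mul_X_pow, Ne.symm hn] using hc2

theorem irreducible_C_X_pow_mul_X_pow_add_C {K : Type*} [Field K] {c : K[X]} {a : K}
    (hsq : Squarefree c) (ha : c.IsRoot a) (hc0 : c.coeff 0 ≠ 0) (m : ℕ) {n : ℕ} (hn : n ≠ 0) :
    Irreducible (C (X ^ m) * X ^ n + C c : K[X][X]) := by
  have ha0 : a ≠ 0 := by
    rintro rfl
    exact hc0 (by rwa [coeff_zero_eq_eval_zero])
  refine irreducible_C_mul_X_pow_add_C_of_eisenstein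
    ((Ideal.span_singleton_prime (X_sub_C_ne_zero a)).mpr (prime_X_sub_C a)) ?_ ?_ ?_ ?_ hn
  · rw [Ideal.mem_span_singleton, dvd_iff_isRoot, IsRoot, eval_pow, eval_X]
    exact pow_ne_zero m ha0
  · rwa [Ideal.mem_span_singleton, dvd_iff_isRoot]
  · rw [Ideal.span_singleton_pow, Ideal.mem_span_singleton, sq]
    exact fun h => not_isUnit_X_sub_C a (hsq _ h)
  · exact (irreducible_X.coprime_iff_not_dvd.mpr (mt X_dvd_iff.mp hc0)).pow_left

end Polynomial

theorem separable_X_pow_four_sub_three_mul_X_sq_add_one :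
    (X ^ 4 - 3 * X ^ 2 + 1 : ℂ[X]).Separable := by
  have h : (C (1 / 10) : ℂ[X]) * 10 = 1 := by
    rw [← C_ofNat, ← C_mul]
    norm_num
  refine ⟨C (1 / 10) * (10 - 12 * X ^ 2), C (1 / 10) * (3 * X ^ 3 - 7 * X), ?_⟩
  simp only [derivative_add, derivative_sub, derivative_X_pow, derivative_mul, derivative_ofNat,
    derivative_one, Nat.cast_ofNat, C_ofNat]
  linear_combination h

noncomputable def p₁InZ : (MvPolynomial (Fin 2) ℂ)[X] :=
  X ^ 4 - C (.X 0 * .X 1) * X ^ 3 + C (.X 0 ^ 2 + .X 1 ^ 2 - 3) * X ^ 2 - C (.X 0 * .X 1) * X + 1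

theorem p₁InZ_monic : p₁InZ.Monic := by
  unfold p₁InZ
  monicity!

theorem irreducible_p₁InZ_map_aeval :
    Irreducible (p₁InZ.map (MvPolynomial.aeval ![(X : ℂ[X]), 0]).toRingHom) := by
  have hmap : p₁InZ.map (MvPolynomial.aeval ![(X : ℂ[X]), 0]).toRingHom =
      (X ^ 4 + (C X ^ 2 - 3) * X ^ 2 + 1 : ℂ[X][X]) := by
    simp [p₁InZ, C_ofNat]
  have hdeg : (X ^ 4 - 3 * X ^ 2 + 1 : ℂ[X]).degree = 4 := by compute_degree!
  obtain ⟨a, ha⟩ := IsAlgClosed.exists_root _ (by rw [hdeg]; decide)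
  have h := irreducible_C_X_pow_mul_X_pow_add_C
    separable_X_pow_four_sub_three_mul_X_sq_add_one.squarefree ha (by simp) 2 two_ne_zero
  rw [hmap, ← MulEquiv.irreducible_iff Bivariate.swap]
  convert h using 1
  simp only [map_add, map_mul, map_pow, map_sub, map_one, map_ofNat, Bivariate.swap_X,
    Bivariate.swap_Y]
  ring

theorem finSuccEquiv_rename_swap_p₁ :
    MvPolynomial.finSuccEquiv ℂ 2 (MvPolynomial.rename (Equiv.swap 0 2)
      ((.X 2) ^ 4 - .X 0 * .X 1 * (.X 2) ^ 3 + ((.X 0) ^ 2 + (.X 1) ^ 2 - 3) * (.X 2) ^ 2 -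
        .X 0 * .X 1 * .X 2 + 1 : MvPolynomial (Fin 3) ℂ)) = p₁InZ := by
  have hx : MvPolynomial.finSuccEquiv ℂ 2 (.X 1) = C (.X 0) :=
    MvPolynomial.finSuccEquiv_X_succ (j := 0)
  have hy : MvPolynomial.finSuccEquiv ℂ 2 (.X 2) = C (.X 1) :=
    MvPolynomial.finSuccEquiv_X_succ (j := 1)
  have h1 : Equiv.swap (0 : Fin 3) 2 1 = 1 := by decide
  simp only [p₁InZ, map_add, map_sub, map_mul, map_pow, map_one, map_ofNat, MvPolynomial.rename_X,
    Equiv.swap_apply_left, Equiv.swap_apply_right, h1, MvPolynomial.finSuccEquiv_X_zero, hx, hy]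
  ring

open MvPolynomial

/-- The polynomial `p₁ = z⁴ − xyz³ + (x² + y² − 3)z² − xyz + 1` is irreducible in `ℂ[x,y,z]`. -/
theorem p1_irreducible :
    Irreducible ((X 2) ^ 4 - X 0 * X 1 * (X 2) ^ 3 +
      ((X 0) ^ 2 + (X 1) ^ 2 - 3) * (X 2) ^ 2 - X 0 * X 1 * X 2 + 1 :
      MvPolynomial (Fin 3) ℂ) := by
  rw [← MulEquiv.irreducible_iff (renameEquiv ℂ (Equiv.swap 0 2)),
    ← MulEquiv.irreducible_iff (finSuccEquiv ℂ 2), renameEquiv_apply, finSuccEquiv_rename_swap_p₁]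
  exact p₁InZ_monic.irreducible_of_irreducible_map _ _ irreducible_p₁InZ_map_aeval
end

section
/- The polynomial p₂ = z³ − xyz² + (x² + y² − 1)z − xy is irreducible in the polynomial ring ℂ[x,y,z]. -/
/-!
Regard `p₂` as a monic cubic in `z` over `ℂ[x, y]`. Its lower coefficients `−xy`, `x² + y² − 1`,
`−xy` all vanish at the point `(x, y) = (0, 1)`, while `xy` does not lie in the square of the
maximal ideal of that point, because its derivative `∂(xy)/∂x = y` does not vanish there.
Eisenstein's criterion at this prime ideal then gives irreducibility.
-/

open MvPolynomial Polynomial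

namespace MvPolynomial

variable {R σ : Type*} [CommRing R]

theorem eval_pderiv_eq_zero_of_mem_ker_eval_sq (a : σ → R) (i : σ) {f : MvPolynomial σ R}
    (hf : f ∈ RingHom.ker (eval a) ^ 2) : eval a (pderiv i f) = 0 := by
  rw [pow_two] at hf
  refine Submodule.mul_induction_on hf (fun g hg h hh => ?_) (fun g h hg hh => ?_)
  · simp [RingHom.mem_ker.1 hg, RingHom.mem_ker.1 hh]
  · simp [hg, hh]

theorem X_mul_X_notMem_ker_eval_sq {a : σ → R} {i j : σ} (hij : i ≠ j) (hj : a j ≠ 0) :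
    X i * X j ∉ RingHom.ker (eval a) ^ 2 := fun h => by
  classical
  have := eval_pderiv_eq_zero_of_mem_ker_eval_sq a i h
  simp [pderiv_X, hij.symm, hj] at this

variable (R)

/-- The swap `0 ↔ 2` that moves `X 2` to the front also exchanges the roles of `X 0` and `X 1`. -/
noncomputable def finThreeEquivPolynomialLast :
    MvPolynomial (Fin 3) R ≃ₐ[R] (MvPolynomial (Fin 2) R)[X] :=
  (renameEquiv R (Equiv.swap 0 2)).trans (finSuccEquiv R 2)

theorem finThreeEquivPolynomialLast_X_zero :
    finThreeEquivPolynomialLast R (X 0) = Polynomial.C (X 1) := by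
  rw [finThreeEquivPolynomialLast, AlgEquiv.trans_apply, renameEquiv_apply, rename_X,
    Equiv.swap_apply_left]
  exact finSuccEquiv_X_succ (j := 1)

theorem finThreeEquivPolynomialLast_X_one :
    finThreeEquivPolynomialLast R (X 1) = Polynomial.C (X 0) := by
  rw [finThreeEquivPolynomialLast, AlgEquiv.trans_apply, renameEquiv_apply, rename_X,
    Equiv.swap_apply_of_ne_of_ne (by decide) (by decide)]
  exact finSuccEquiv_X_succ (j := 0)

theorem finThreeEquivPolynomialLast_X_two :
    finThreeEquivPolynomialLast R (X 2) = Polynomial.X := by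
  rw [finThreeEquivPolynomialLast, AlgEquiv.trans_apply, renameEquiv_apply, rename_X,
    Equiv.swap_apply_right]
  exact finSuccEquiv_X_zero

end MvPolynomial

namespace Polynomial

theorem irreducible_cubic_of_eisenstein {R : Type*} [CommRing R] [IsDomain R] {P : Ideal R}
    (hP : P.IsPrime) {a b c : R} (ha : a ∈ P) (hb : b ∈ P) (hc : c ∈ P) (hc2 : c ∉ P ^ 2) :
    Irreducible (X ^ 3 + C a * X ^ 2 + C b * X + C c) := by
  have hmonic : (X ^ 3 + C a * X ^ 2 + C b * X + C c).Monic := by monicity!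
  have hdeg : (X ^ 3 + C a * X ^ 2 + C b * X + C c).degree = 3 := by compute_degree!
  refine irreducible_of_eisenstein_criterion hP ?_ ?_ (by rw [hdeg]; norm_num) ?_
    hmonic.isPrimitive
  · rw [hmonic.leadingCoeff]; exact (Ideal.ne_top_iff_one P).1 hP.ne_top
  · intro n hn
    rw [hdeg] at hn
    have hn3 : n < 3 := by exact_mod_cast hn
    interval_cases n <;> simpa [coeff_X_pow, coeff_X]
  · simpa [coeff_X_pow, coeff_X]

end Polynomial

/-- The polynomial `p₂ = z³ − xyz² + (x² + y² − 1)z − xy` is irreducible in `ℂ[x,y,z]`. -/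
theorem p2_irreducible :
    Irreducible ((X 2) ^ 3 - X 0 * X 1 * (X 2) ^ 2 +
      ((X 0) ^ 2 + (X 1) ^ 2 - 1) * X 2 - X 0 * X 1 :
      MvPolynomial (Fin 3) ℂ) := by
  let P := RingHom.ker (eval ![1, 0] : MvPolynomial (Fin 2) ℂ →+* ℂ)
  have hP : P.IsPrime := RingHom.ker_isPrime _
  have hxy : -(X 1 * X 0) ∈ P := by simp [P]
  have hb : X 1 ^ 2 + X 0 ^ 2 - 1 ∈ P := by simp [P]
  have hxy_sq : -(X 1 * X 0) ∉ P ^ 2 := by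
    rw [Ideal.neg_mem_iff]
    exact X_mul_X_notMem_ker_eval_sq (by decide) (by simp)
  refine (MulEquiv.irreducible_iff (finThreeEquivPolynomialLast ℂ)).1 ?_
  convert irreducible_cubic_of_eisenstein hP hxy hb hxy hxy_sq using 1
  simp only [map_sub, map_add, map_mul, map_pow, map_one, map_neg,
    finThreeEquivPolynomialLast_X_zero, finThreeEquivPolynomialLast_X_one,
    finThreeEquivPolynomialLast_X_two]
  ring
end

section
/- The polynomial r = x² + y² + z² − xyz − 3 is irreducible in the polynomial ring ℂ[x,y,z]. -/
/-!
As a polynomial in `x` over `ℂ[y, z]`, `r` is monic quadratic with discriminant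
`y²z² − 4(y² + z² − 3)`. A factorization of `r` would make this discriminant a square, hence
also its specialization `−4(y² − 3)` at `z = 0`; but `y² − 3` is separable, so this
specialization is squarefree, and it is not a unit.
-/

open MvPolynomial
open scoped Polynomial

theorem Squarefree.isUnit_of_isSquare {M : Type*} [CommMonoid M] {p : M} (hp : Squarefree p)
    (h : IsSquare p) : IsUnit p := by
  obtain ⟨d, rfl⟩ := h
  exact (hp d dvd_rfl).mul (hp d dvd_rfl)

namespace Polynomial

theorem isSquare_discrim_of_not_irreducible {R : Type*} [CommRing R] [IsDomain R] (b c : R)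
    (h : ¬Irreducible (X ^ 2 + C b * X + C c)) : IsSquare (discrim 1 b c) := by
  have hmonic : (X ^ 2 + C b * X + C c).Monic := by
    rw [add_assoc]
    exact monic_X_pow_add (degree_linear_le.trans_lt (by norm_num))
  have hdeg : (X ^ 2 + C b * X + C c).natDegree = 2 := by
    simpa only [natDegree_add_C, map_one, one_mul] using
      natDegree_quadratic (R := R) (a := 1) (b := b) (c := c) one_ne_zero
  obtain ⟨c₁, c₂, hc, hb⟩ := (hmonic.not_irreducible_iff_exists_add_mul_eq_coeff hdeg).mp h
  simp only [coeff_add, coeff_X_pow, OfNat.zero_ne_ofNat, ↓reduceIte, mul_coeff_zero,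
    coeff_C_zero, coeff_X_zero, mul_zero, add_zero, zero_add, OfNat.one_ne_ofNat, coeff_mul_X,
    coeff_C_succ] at hc hb
  exact ⟨c₁ - c₂, by rw [discrim, hc, hb]; ring⟩

theorem not_isSquare_C_mul_X_pow_sub_C {K : Type*} [Field K] {n : ℕ} {u a : K} (hu : u ≠ 0)
    (ha : a ≠ 0) (hn : (n : K) ≠ 0) : ¬IsSquare (C u * (X ^ n - C a)) := by
  intro h
  have hsqfree : Squarefree (C u * (X ^ n - C a)) :=
    (separable_X_pow_sub_C a hn ha).squarefree.squarefree_of_dvd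
      ((isUnit_C.mpr hu.isUnit).mul_left_dvd.mpr dvd_rfl)
  have hdeg := natDegree_eq_zero_of_isUnit
    (isUnit_of_mul_isUnit_right (hsqfree.isUnit_of_isSquare h))
  rw [natDegree_X_pow_sub_C] at hdeg
  simp [hdeg] at hn

end Polynomial

theorem finSuccEquiv_sq_add_sq_add_sq_sub_mul_sub_three {R : Type*} [CommRing R] :
    finSuccEquiv R 2 (X 0 ^ 2 + X 1 ^ 2 + X 2 ^ 2 - X 0 * X 1 * X 2 - 3) =
      Polynomial.X ^ 2 + Polynomial.C (-(X 0 * X 1)) * Polynomial.X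
        + Polynomial.C (X 0 ^ 2 + X 1 ^ 2 - 3) := by
  have h1 : (1 : Fin 3) = (0 : Fin 2).succ := rfl
  have h2 : (2 : Fin 3) = (1 : Fin 2).succ := rfl
  rw [h1, h2]
  simp only [map_sub, map_add, map_pow, map_mul, map_ofNat, map_neg,
    finSuccEquiv_X_zero, finSuccEquiv_X_succ]
  ring

/-- The polynomial `r = x² + y² + z² − xyz − 3` is irreducible in `ℂ[x,y,z]`. -/
theorem r_irreducible :
    Irreducible ((X 0) ^ 2 + (X 1) ^ 2 + (X 2) ^ 2 - X 0 * X 1 * X 2 - 3 :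
      MvPolynomial (Fin 3) ℂ) := by
  rw [← MulEquiv.irreducible_iff (finSuccEquiv ℂ 2),
    finSuccEquiv_sq_add_sq_add_sq_sub_mul_sub_three]
  by_contra hreducible
  have hsq := (Polynomial.isSquare_discrim_of_not_irreducible _ _ hreducible).map
    (aeval ![Polynomial.X, 0] : MvPolynomial (Fin 2) ℂ →ₐ[ℂ] ℂ[X])
  have hdiscrim_at_zero : aeval ![(Polynomial.X : ℂ[X]), 0]
      (discrim 1 (-(X 0 * X 1)) (X 0 ^ 2 + X 1 ^ 2 - 3) : MvPolynomial (Fin 2) ℂ) =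
        Polynomial.C (-4) * (Polynomial.X ^ 2 - Polynomial.C 3) := by
    simp only [discrim, map_sub, map_add, map_mul, map_pow, map_neg, map_one, map_ofNat, aeval_X,
      Matrix.cons_val_zero, Matrix.cons_val_one]
    ring
  rw [hdiscrim_at_zero] at hsq
  exact Polynomial.not_isSquare_C_mul_X_pow_sub_C (by norm_num) (by norm_num) (by norm_num) hsq
end

section
/- The affine surface V(p₀) ⊂ ℂ³ is smooth: for every (x,y,z) ∈ ℂ³ with p₀(x,y,z) = 0, the gradient (∂p₀/∂x, ∂p₀/∂y, ∂p₀/∂z)(x,y,z) = (−yz² + 2xz − y, −xz² + 2yz − x, 3z² − 2xyz + x² + y² − 2) is nonzero. -/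
/-!
If `∂ₓp₀ = ∂ᵧp₀ = 0` then `xy(z² − 1)² = 0`. When `z² = 1` the gradient satisfies
`4 ∂_z p₀ = 4 + (∂ₓp₀)²`, so `∂_z p₀ ≠ 0`. When `x = 0` (or symmetrically `y = 0`) the
vanishing of `∂ₓp₀` and `∂ᵧp₀` forces `y = 0`, and `p₀(0, 0, z) = z³ − 2z` is squarefree.
Only division by `2` is used, so this holds over any field of characteristic `≠ 2`.
-/

namespace WhiteheadLink

section CommRing

variable {R : Type*} [CommRing R] (x y z : R)

def poly : R := z ^ 3 - x * y * z ^ 2 + (x ^ 2 + y ^ 2 - 2) * z - x * y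

def derivX : R := -(y * z ^ 2) + 2 * x * z - y

def derivY : R := -(x * z ^ 2) + 2 * y * z - x

def derivZ : R := 3 * z ^ 2 - 2 * x * y * z + x ^ 2 + y ^ 2 - 2

theorem derivX_swap : derivX y x z = derivY x y z := by
  unfold derivX derivY; ring

theorem derivY_swap : derivY y x z = derivX x y z := by
  unfold derivX derivY; ring

variable {x y z}

theorem mul_mul_sq_sub_one_sq_eq_zero (hx : derivX x y z = 0) (hy : derivY x y z = 0) :
    x * y * (z ^ 2 - 1) ^ 2 = 0 := by
  unfold derivX at hx
  unfold derivY at hy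
  linear_combination (-(x * (z ^ 2 + 1))) * hx - (2 * x * z) * hy

theorem two_sq_mul_derivZ_of_sq_eq_one (hz : z ^ 2 = 1) :
    2 ^ 2 * derivZ x y z = 2 ^ 2 + derivX x y z ^ 2 := by
  unfold derivX derivZ
  linear_combination (12 - 4 * x ^ 2 + 4 * x * y * z - y ^ 2 * (z ^ 2 + 3)) * hz

theorem two_mul_eq_derivX_derivY_at_zero :
    2 * y = -(2 * derivX 0 y z + z * derivY 0 y z) := by
  unfold derivX derivY; ring

-- A Bézout identity witnessing that `z³ − 2z` is squarefree.
theorem bezout_poly_derivZ_zero_zero :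
    (3 * z ^ 2 - 4) * derivZ 0 0 z - 9 * z * poly 0 0 z = 2 ^ 3 := by
  unfold derivZ poly; ring

end CommRing

section Field

variable {K : Type*} [Field K] [NeZero (2 : K)] {x y z : K}

theorem eq_zero_of_derivX_derivY_eq_zero_of_left_eq_zero
    (hx : derivX 0 y z = 0) (hy : derivY 0 y z = 0) : y = 0 := by
  have h2y : 2 * y = 0 := by rw [two_mul_eq_derivX_derivY_at_zero, hx, hy]; ring
  exact (mul_eq_zero.mp h2y).resolve_left two_ne_zero

theorem derivZ_ne_zero_of_sq_eq_one (hz : z ^ 2 = 1) (hx : derivX x y z = 0) :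
    derivZ x y z ≠ 0 := fun h ↦ pow_ne_zero 2 (two_ne_zero (α := K)) <| by
  linear_combination -two_sq_mul_derivZ_of_sq_eq_one (x := x) (y := y) hz + 2 ^ 2 * h
    - derivX x y z * hx

theorem derivZ_zero_zero_ne_zero (hp : poly 0 0 z = 0) : derivZ (0 : K) 0 z ≠ 0 :=
  fun h ↦ pow_ne_zero 3 (two_ne_zero (α := K)) <| by
    linear_combination -bezout_poly_derivZ_zero_zero (z := z) + (3 * z ^ 2 - 4) * h - 9 * z * hp

theorem not_singular (hp : poly x y z = 0) (hx : derivX x y z = 0) (hy : derivY x y z = 0) :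
    derivZ x y z ≠ 0 := by
  rcases mul_eq_zero.mp (mul_mul_sq_sub_one_sq_eq_zero hx hy) with hxy | hz
  · have hxy : x = 0 ∧ y = 0 := by
      rcases mul_eq_zero.mp hxy with rfl | rfl
      · exact ⟨rfl, eq_zero_of_derivX_derivY_eq_zero_of_left_eq_zero hx hy⟩
      · rw [← derivY_swap] at hx
        rw [← derivX_swap] at hy
        exact ⟨eq_zero_of_derivX_derivY_eq_zero_of_left_eq_zero hy hx, rfl⟩
    obtain ⟨rfl, rfl⟩ := hxy
    exact derivZ_zero_zero_ne_zero hp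
  · exact derivZ_ne_zero_of_sq_eq_one (sub_eq_zero.mp (pow_eq_zero_iff two_ne_zero |>.mp hz)) hx

end Field

end WhiteheadLink

/-- The affine surface `V(p₀)` is smooth: at every zero of
`p₀ = z³ − xyz² + (x² + y² − 2)z − xy` the gradient of `p₀` is nonzero. -/
theorem V_p0_smooth (x y z : ℂ)
    (h : z ^ 3 - x * y * z ^ 2 + (x ^ 2 + y ^ 2 - 2) * z - x * y = 0) :
    ¬ (-(y * z ^ 2) + 2 * x * z - y = 0 ∧
       -(x * z ^ 2) + 2 * y * z - x = 0 ∧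
       3 * z ^ 2 - 2 * x * y * z + x ^ 2 + y ^ 2 - 2 = 0) :=
  fun ⟨hx, hy, hz⟩ => WhiteheadLink.not_singular h hx hy hz
end

section
/- The affine surface V(p₁) ⊂ ℂ³ is smooth: for every (x,y,z) ∈ ℂ³ with p₁(x,y,z) = 0, the gradient (∂p₁/∂x, ∂p₁/∂y, ∂p₁/∂z)(x,y,z) = (−yz³ + 2xz² − yz, −xz³ + 2yz² − xz, 4z³ − 3xyz² + 2(x² + y² − 3)z − xy) is nonzero. -/
/-!
At a singular point `z ≠ 0`, because `p₁(x, y, 0) = 1`. Dividing `∂ₓp₁ = ∂ᵧp₁ = 0` by `z` leaves a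
linear system in `(x, y)` of determinant `-(z² - 1)²`. If `z² = 1` the system forces `y = xz`, and
then `p₁ = -1`. Otherwise `x = y = 0`, so `∂_z p₁ = 2z(2z² - 3)` gives `2z² = 3`, and then `4p₁ = -5`.
-/

section

variable {K : Type*} [Field K]

def p1 (x y z : K) : K :=
  z ^ 4 - x * y * z ^ 3 + (x ^ 2 + y ^ 2 - 3) * z ^ 2 - x * y * z + 1

theorem ne_zero_of_p1_eq_zero {x y z : K} (h : p1 x y z = 0) : z ≠ 0 := by
  rintro rfl
  simp [p1] at h

theorem p1_self_mul_eq_neg_one_of_sq_eq_one {x z : K} (hz : z ^ 2 = 1) : p1 x (x * z) z = -1 := by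
  unfold p1
  linear_combination (z ^ 2 - 2) * hz

theorem four_mul_p1_zero_zero_eq_neg_five {z : K} (hz : 2 * z ^ 2 = 3) : 4 * p1 0 0 z = -5 := by
  unfold p1
  linear_combination (2 * z ^ 2 - 3) * hz

theorem mul_sq_sub_one_sq_eq_zero {x y z : K} (hx : 2 * x * z = y * (z ^ 2 + 1))
    (hy : 2 * y * z = x * (z ^ 2 + 1)) : x * (z ^ 2 - 1) ^ 2 = 0 := by
  linear_combination -(z ^ 2 + 1) * hy - 2 * z * hx

theorem p1_grad_ne_zero (two_ne : (2 : K) ≠ 0) (five_ne : (5 : K) ≠ 0) {x y z : K}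
    (h : p1 x y z = 0) :
    ¬ (-(y * z ^ 3) + 2 * x * z ^ 2 - y * z = 0 ∧
       -(x * z ^ 3) + 2 * y * z ^ 2 - x * z = 0 ∧
       4 * z ^ 3 - 3 * x * y * z ^ 2 + 2 * (x ^ 2 + y ^ 2 - 3) * z - x * y = 0) := by
  rintro ⟨hx, hy, hz⟩
  have z_ne := ne_zero_of_p1_eq_zero h
  have ex : 2 * x * z = y * (z ^ 2 + 1) := mul_left_cancel₀ z_ne (by linear_combination hx)
  have ey : 2 * y * z = x * (z ^ 2 + 1) := mul_left_cancel₀ z_ne (by linear_combination hy)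
  by_cases hz1 : z ^ 2 = 1
  · obtain rfl : y = x * z := mul_left_cancel₀ two_ne (by linear_combination -y * hz1 - ex)
    have := p1_self_mul_eq_neg_one_of_sq_eq_one (x := x) hz1
    rw [h] at this
    norm_num at this
  · have hsq : (z ^ 2 - 1) ^ 2 ≠ 0 := pow_ne_zero 2 (sub_ne_zero.mpr hz1)
    obtain rfl : x = 0 := (mul_eq_zero.mp (mul_sq_sub_one_sq_eq_zero ex ey)).resolve_right hsq
    obtain rfl : y = 0 := (mul_eq_zero.mp (mul_sq_sub_one_sq_eq_zero ey ex)).resolve_right hsq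
    have hz2 : 2 * z ^ 2 = 3 :=
      mul_left_cancel₀ (mul_ne_zero two_ne z_ne) (by linear_combination hz)
    have := four_mul_p1_zero_zero_eq_neg_five hz2
    rw [h, mul_zero] at this
    exact five_ne (by linear_combination this)

end

/-- The affine surface `V(p₁)` is smooth: at every zero of
`p₁ = z⁴ − xyz³ + (x² + y² − 3)z² − xyz + 1` the gradient of `p₁` is nonzero. -/
theorem V_p1_smooth (x y z : ℂ)
    (h : z ^ 4 - x * y * z ^ 3 + (x ^ 2 + y ^ 2 - 3) * z ^ 2 - x * y * z + 1 = 0) :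
    ¬ (-(y * z ^ 3) + 2 * x * z ^ 2 - y * z = 0 ∧
       -(x * z ^ 3) + 2 * y * z ^ 2 - x * z = 0 ∧
       4 * z ^ 3 - 3 * x * y * z ^ 2 + 2 * (x ^ 2 + y ^ 2 - 3) * z - x * y = 0) :=
  p1_grad_ne_zero two_ne_zero (by norm_num) h
end

section
/- The affine surface V(p₂) ⊂ ℂ³ is smooth: for every (x,y,z) ∈ ℂ³ with p₂(x,y,z) = 0, the gradient (∂p₂/∂x, ∂p₂/∂y, ∂p₂/∂z)(x,y,z) = (−yz² + 2xz − y, −xz² + 2yz − x, 3z² − 2xyz + x² + y² − 1) is nonzero. -/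
/-!
Over a field of characteristic `≠ 2`, `p_x - p_y = (x - y)(z + 1)²` and
`p_x + p_y = -(x + y)(z - 1)²`. So at a critical point either `z = ±1`, where
`p_z = 2 + (x ∓ y)²` and the other factorisation forces `x = ± y`, making `p_z = 2`;
or `x = y = 0`, where `z p_z - 3p = 2z` forces `z = 0` and then `p_z = -1`.
-/

section

variable {K : Type*} [Field K] (x y z : K)

def p₂ : K := z ^ 3 - x * y * z ^ 2 + (x ^ 2 + y ^ 2 - 1) * z - x * y

def p₂_x : K := -(y * z ^ 2) + 2 * x * z - y

def p₂_y : K := -(x * z ^ 2) + 2 * y * z - x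

def p₂_z : K := 3 * z ^ 2 - 2 * x * y * z + x ^ 2 + y ^ 2 - 1

theorem p₂_x_sub_p₂_y : p₂_x x y z - p₂_y x y z = (x - y) * (z + 1) ^ 2 := by
  unfold p₂_x p₂_y; ring

theorem p₂_x_add_p₂_y : p₂_x x y z + p₂_y x y z = -((x + y) * (z - 1) ^ 2) := by
  unfold p₂_x p₂_y; ring

theorem p₂_z_one : p₂_z x y 1 = 2 + (x - y) ^ 2 := by
  unfold p₂_z; ring

theorem p₂_z_neg_one : p₂_z x y (-1) = 2 + (x + y) ^ 2 := by
  unfold p₂_z; ring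

theorem mul_p₂_z_sub_three_mul_p₂_zero_zero : z * p₂_z 0 0 z - 3 * p₂ 0 0 z = 2 * z := by
  unfold p₂ p₂_z; ring

variable {x y z}

theorem p₂_z_zero_zero_ne_zero (h2 : (2 : K) ≠ 0) (h : p₂ 0 0 z = 0) : p₂_z 0 0 z ≠ 0 := by
  intro hz
  have hz0 : 2 * z = 0 := by
    rw [← mul_p₂_z_sub_three_mul_p₂_zero_zero, h, hz]; ring
  obtain rfl : z = 0 := (mul_eq_zero.1 hz0).resolve_left h2
  norm_num [p₂_z] at hz

theorem p₂_gradient_ne_zero (h2 : (2 : K) ≠ 0) (h : p₂ x y z = 0) :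
    ¬ (p₂_x x y z = 0 ∧ p₂_y x y z = 0 ∧ p₂_z x y z = 0) := by
  rintro ⟨hx, hy, hz⟩
  have hsub : (x - y) * (z + 1) ^ 2 = 0 := by
    linear_combination hx - hy - p₂_x_sub_p₂_y x y z
  have hadd : (x + y) * (z - 1) ^ 2 = 0 := by
    linear_combination p₂_x_add_p₂_y x y z - hx - hy
  rcases mul_eq_zero.1 hsub with hxy | hz₁ <;> rcases mul_eq_zero.1 hadd with hxy' | hz₂
  · have h2x : 2 * x = 0 := by linear_combination hxy + hxy'
    obtain rfl : x = 0 := (mul_eq_zero.1 h2x).resolve_left h2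
    obtain rfl : y = 0 := by linear_combination hxy'
    exact p₂_z_zero_zero_ne_zero h2 h hz
  · obtain rfl : z = 1 := by linear_combination pow_eq_zero_iff two_ne_zero |>.1 hz₂
    rw [p₂_z_one, hxy] at hz
    exact h2 (by simpa using hz)
  · obtain rfl : z = -1 := by linear_combination pow_eq_zero_iff two_ne_zero |>.1 hz₁
    rw [p₂_z_neg_one, hxy'] at hz
    exact h2 (by simpa using hz)
  · exact h2 (by linear_combination (pow_eq_zero_iff two_ne_zero |>.1 hz₁) -
      (pow_eq_zero_iff two_ne_zero |>.1 hz₂))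

end

/-- The affine surface `V(p₂)` is smooth: at every zero of
`p₂ = z³ − xyz² + (x² + y² − 1)z − xy` the gradient of `p₂` is nonzero. -/
theorem V_p2_smooth (x y z : ℂ)
    (h : z ^ 3 - x * y * z ^ 2 + (x ^ 2 + y ^ 2 - 1) * z - x * y = 0) :
    ¬ (-(y * z ^ 2) + 2 * x * z - y = 0 ∧
       -(x * z ^ 2) + 2 * y * z - x = 0 ∧
       3 * z ^ 2 - 2 * x * y * z + x ^ 2 + y ^ 2 - 1 = 0) :=
  p₂_gradient_ne_zero two_ne_zero h
end

section
/- The projective cubic surface V₊(R) ⊂ ℙ³ defined by R := (x² + y² + z²)w + xyz − 3w³ is smooth: if (x,y,z,w) ∈ ℂ⁴ satisfies all four partial derivative equations 2xw + yz = 0, 2yw + xz = 0, 2zw + xy = 0, and x² + y² + z² − 9w² = 0, then (x,y,z,w) = (0,0,0,0). -/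
/-!
If `w ≠ 0`, subtracting `y ∂_y R` from `x ∂_x R` (and `z ∂_z R` from `y ∂_y R`) gives
`x² = y² = z²`, so `∂_w R = 0` becomes `x² = 3w²`; squaring `2xw = -yz` then gives
`4x²w² = x⁴`, that is `12w⁴ = 9w⁴`, which forces `w = 0` after all. Once `w = 0`, the products
`yz, xz, xy` vanish, so at most one coordinate is nonzero, and `x² + y² + z² = 0` kills it.
-/

theorem eq_zero_of_mul_eq_zero_of_sq_add_sq_add_sq_eq_zero {R : Type*} [CommRing R] [IsReduced R]
    {x y z : R} (hyz : y * z = 0) (hxz : x * z = 0) (hxy : x * y = 0)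
    (hsq : x ^ 2 + y ^ 2 + z ^ 2 = 0) : x = 0 ∧ y = 0 ∧ z = 0 :=
  ⟨IsReduced.eq_zero x ⟨3, by linear_combination x * hsq - y * hxy - z * hxz⟩,
    IsReduced.eq_zero y ⟨3, by linear_combination y * hsq - x * hxy - z * hyz⟩,
    IsReduced.eq_zero z ⟨3, by linear_combination z * hsq - x * hxz - y * hyz⟩⟩

theorem w_eq_zero_of_partials_eq_zero {K : Type*} [Field K] (two_ne : (2 : K) ≠ 0)
    (three_ne : (3 : K) ≠ 0) {x y z w : K}
    (h1 : 2 * x * w + y * z = 0) (h2 : 2 * y * w + x * z = 0)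
    (h3 : 2 * z * w + x * y = 0) (h4 : x ^ 2 + y ^ 2 + z ^ 2 - 9 * w ^ 2 = 0) : w = 0 := by
  by_contra hw
  have h2w : 2 * w ≠ 0 := mul_ne_zero two_ne hw
  have hxy : x ^ 2 = y ^ 2 := by
    refine sub_eq_zero.mp ((mul_eq_zero.mp ?_).resolve_left h2w)
    linear_combination x * h1 - y * h2
  have hyz : y ^ 2 = z ^ 2 := by
    refine sub_eq_zero.mp ((mul_eq_zero.mp ?_).resolve_left h2w)
    linear_combination y * h2 - z * h3
  have hx : x ^ 2 = 3 * w ^ 2 := by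
    refine sub_eq_zero.mp ((mul_eq_zero.mp ?_).resolve_left three_ne)
    linear_combination h4 + 2 * hxy + hyz
  have hw4 : 3 * w ^ 4 = 0 := by
    linear_combination (2 * x * w - y * z) * h1 - (x ^ 2 + y ^ 2) * hxy - y ^ 2 * hyz
      + (x ^ 2 - w ^ 2) * hx
  exact hw (pow_eq_zero_iff four_ne_zero |>.mp ((mul_eq_zero.mp hw4).resolve_left three_ne))

/-- The projective cubic surface `V₊(R)` with `R = (x² + y² + z²)w + xyz − 3w³` is smooth:
the four partial derivatives of `R` have no common zero besides the origin of `ℂ⁴`. -/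
theorem cubic_R_smooth (x y z w : ℂ)
    (h1 : 2 * x * w + y * z = 0) (h2 : 2 * y * w + x * z = 0)
    (h3 : 2 * z * w + x * y = 0) (h4 : x ^ 2 + y ^ 2 + z ^ 2 - 9 * w ^ 2 = 0) :
    x = 0 ∧ y = 0 ∧ z = 0 ∧ w = 0 := by
  obtain rfl := w_eq_zero_of_partials_eq_zero two_ne_zero three_ne_zero h1 h2 h3 h4
  obtain ⟨hx, hy, hz⟩ := eq_zero_of_mul_eq_zero_of_sq_add_sq_add_sq_eq_zero
    (by linear_combination h1 : y * z = 0) (by linear_combination h2 : x * z = 0)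
    (by linear_combination h3 : x * y = 0) (by linear_combination h4)
  exact ⟨hx, hy, hz, rfl⟩
end

section
/- The surface S₁ = V(F₁) ⊂ ℙ² × ℙ¹ has exactly six singular points, namely (1:0:0, 1:0), (0:1:0, 1:0), (1:0:0, 0:1), (0:1:0, 0:1), (1:1:0, 1:1), (1:−1:0, 1:−1). Precisely: for (x,y,u) ∈ ℂ³ ∖ {0} and (z,w) ∈ ℂ² ∖ {0}, all five partial derivatives ∂F₁/∂x, ∂F₁/∂y, ∂F₁/∂u, ∂F₁/∂z, ∂F₁/∂w vanish at (x,y,u,z,w) if and only if there exist nonzero scalars λ, μ ∈ ℂ such that (x,y,u) = λ·v and (z,w) = μ·p for one of the six pairs (v,p) ∈ {((1,0,0),(1,0)), ((0,1,0),(1,0)), ((1,0,0),(0,1)), ((0,1,0),(0,1)), ((1,1,0),(1,1)), ((1,−1,0),(1,−1))}. -/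
/-!
Off the fibres `z = 0` and `w = 0`, the sum and the difference of `∂F₁/∂x` and `∂F₁/∂y` are
`-zw (x + y)(z - w)²` and `zw (x - y)(z + w)²`, so a singular point has `w = ±z` and `y = ±x`
(with matching signs), or `x = y = 0`. In the first case `∂F₁/∂u = -2uz⁴` forces `u = 0`; in the
second, `∂F₁/∂z = 2u²z(2z² - 3w²)` and `∂F₁/∂w = 2u²w(2w² - 3z²)` cannot both vanish unless
`u = 0`, which leaves no point of `ℙ²`. On the fibre `w = 0`, `∂F₁/∂u = 2uz⁴` gives `u = 0` and
then `∂F₁/∂w = -xyz³` gives `xy = 0`; the fibre `z = 0` is its mirror image under `z ↔ w`.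
-/

variable {K : Type*} [Field K] {x y u z w : K}

/-- The partial derivatives `∂F₁/∂x, ∂F₁/∂y, ∂F₁/∂u, ∂F₁/∂z, ∂F₁/∂w` all vanish. -/
def IsSingularF₁ (x y u z w : K) : Prop :=
  -(y * z ^ 3 * w) + 2 * x * z ^ 2 * w ^ 2 - y * z * w ^ 3 = 0 ∧
  -(x * z ^ 3 * w) + 2 * y * z ^ 2 * w ^ 2 - x * z * w ^ 3 = 0 ∧
  2 * u * z ^ 4 - 6 * u * z ^ 2 * w ^ 2 + 2 * u * w ^ 4 = 0 ∧
  4 * u ^ 2 * z ^ 3 - 3 * x * y * z ^ 2 * w +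
    2 * (x ^ 2 + y ^ 2 - 3 * u ^ 2) * z * w ^ 2 - x * y * w ^ 3 = 0 ∧
  -(x * y * z ^ 3) + 2 * (x ^ 2 + y ^ 2 - 3 * u ^ 2) * z ^ 2 * w -
    3 * x * y * z * w ^ 2 + 4 * u ^ 2 * w ^ 3 = 0

namespace IsSingularF₁

theorem swap (h : IsSingularF₁ x y u z w) : IsSingularF₁ x y u w z := by
  obtain ⟨e₁, e₂, e₃, e₄, e₅⟩ := h
  exact ⟨by linear_combination e₁, by linear_combination e₂, by linear_combination e₃,
    by linear_combination e₅, by linear_combination e₄⟩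

theorem u_eq_zero_and_mul_eq_zero_of_w_eq_zero (h₂ : (2 : K) ≠ 0) (h : IsSingularF₁ x y u z w)
    (hw : w = 0) (hz : z ≠ 0) : u = 0 ∧ x * y = 0 := by
  subst hw
  obtain ⟨-, -, e₃, -, e₅⟩ := h
  have hu : u = 0 :=
    eq_zero_of_ne_zero_of_mul_left_eq_zero (mul_ne_zero h₂ (pow_ne_zero 4 hz))
      (by linear_combination e₃)
  subst hu
  exact ⟨rfl, eq_zero_of_ne_zero_of_mul_left_eq_zero (pow_ne_zero 3 hz)
    (by linear_combination -e₅)⟩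

theorem add_mul_sub_sq_eq_zero_and_sub_mul_add_sq_eq_zero (h : IsSingularF₁ x y u z w)
    (hz : z ≠ 0) (hw : w ≠ 0) : (x + y) * (z - w) ^ 2 = 0 ∧ (x - y) * (z + w) ^ 2 = 0 := by
  obtain ⟨e₁, e₂, -⟩ := h
  have hzw : z * w ≠ 0 := mul_ne_zero hz hw
  exact ⟨eq_zero_of_ne_zero_of_mul_left_eq_zero hzw (by linear_combination -e₁ - e₂),
    eq_zero_of_ne_zero_of_mul_left_eq_zero hzw (by linear_combination e₁ - e₂)⟩

theorem u_eq_zero_of_sq_eq_sq (h₂ : (2 : K) ≠ 0) (h : IsSingularF₁ x y u z w) (hz : z ≠ 0)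
    (hwz : w ^ 2 = z ^ 2) : u = 0 := by
  obtain ⟨-, -, e₃, -⟩ := h
  exact eq_zero_of_ne_zero_of_mul_left_eq_zero (mul_ne_zero h₂ (pow_ne_zero 4 hz))
    (by linear_combination -e₃ + 2 * u * (w ^ 2 + z ^ 2 - 3 * z ^ 2) * hwz)

theorem u_eq_zero_of_x_eq_zero_of_y_eq_zero (h₂ : (2 : K) ≠ 0) (h₅ : (5 : K) ≠ 0)
    (h : IsSingularF₁ x y u z w) (hx : x = 0) (hy : y = 0) (hz : z ≠ 0) (hw : w ≠ 0) :
    u = 0 := by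
  subst hx hy
  obtain ⟨-, -, -, e₄, e₅⟩ := h
  by_contra hu
  have hu₂ : 2 * u ^ 2 ≠ 0 := mul_ne_zero h₂ (pow_ne_zero 2 hu)
  have hz' : 2 * z ^ 2 - 3 * w ^ 2 = 0 :=
    eq_zero_of_ne_zero_of_mul_left_eq_zero (mul_ne_zero hu₂ hz) (by linear_combination e₄)
  have hw' : 2 * w ^ 2 - 3 * z ^ 2 = 0 :=
    eq_zero_of_ne_zero_of_mul_left_eq_zero (mul_ne_zero hu₂ hw) (by linear_combination e₅)
  have : 5 * z ^ 2 = 0 := by linear_combination -2 * hz' - 3 * hw'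
  exact hz (pow_eq_zero_iff two_ne_zero |>.mp (eq_zero_of_ne_zero_of_mul_left_eq_zero h₅ this))

end IsSingularF₁

theorem isSingularF₁_of_u_eq_zero (hu : u = 0)
    (h : x * y = 0 ∧ z * w = 0 ∨ y = x ∧ w = z ∨ y = -x ∧ w = -z) : IsSingularF₁ x y u z w := by
  subst hu
  rcases h with ⟨hxy, hzw⟩ | ⟨rfl, rfl⟩ | ⟨rfl, rfl⟩
  on_goal 1 =>
    rcases mul_eq_zero.mp hxy with rfl | rfl <;> rcases mul_eq_zero.mp hzw with rfl | rfl
  all_goals exact ⟨by ring, by ring, by ring, by ring, by ring⟩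

theorem IsSingularF₁.u_eq_zero_and (h₂ : (2 : K) ≠ 0) (h₅ : (5 : K) ≠ 0)
    (h : IsSingularF₁ x y u z w) (hxyu : (x, y, u) ≠ (0, 0, 0)) (hzw : (z, w) ≠ (0, 0)) :
    u = 0 ∧ (x * y = 0 ∧ z * w = 0 ∨ y = x ∧ w = z ∨ y = -x ∧ w = -z) := by
  by_cases hz : z = 0
  · have hw : w ≠ 0 := by rintro rfl; exact hzw (by rw [hz])
    obtain ⟨hu, hxy⟩ := h.swap.u_eq_zero_and_mul_eq_zero_of_w_eq_zero h₂ hz hw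
    exact ⟨hu, .inl ⟨hxy, by rw [hz, zero_mul]⟩⟩
  by_cases hw : w = 0
  · obtain ⟨hu, hxy⟩ := h.u_eq_zero_and_mul_eq_zero_of_w_eq_zero h₂ hw hz
    exact ⟨hu, .inl ⟨hxy, by rw [hw, mul_zero]⟩⟩
  obtain ⟨hs, hd⟩ := h.add_mul_sub_sq_eq_zero_and_sub_mul_add_sq_eq_zero hz hw
  have h2z : (2 * z) ^ 2 ≠ 0 := pow_ne_zero 2 (mul_ne_zero h₂ hz)
  by_cases hwz : w = z
  · have hyx : y = x := by
      subst hwz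
      exact (sub_eq_zero.mp (eq_zero_of_ne_zero_of_mul_right_eq_zero h2z
        (by linear_combination hd))).symm
    exact ⟨h.u_eq_zero_of_sq_eq_sq h₂ hz (by rw [hwz]), .inr (.inl ⟨hyx, hwz⟩)⟩
  by_cases hwz' : w = -z
  · have hyx : y = -x := by
      subst hwz'
      exact eq_neg_of_add_eq_zero_right (eq_zero_of_ne_zero_of_mul_right_eq_zero h2z
        (by linear_combination hs))
    exact ⟨h.u_eq_zero_of_sq_eq_sq h₂ hz (by rw [hwz', neg_sq]), .inr (.inr ⟨hyx, hwz'⟩)⟩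
  have hs' : x + y = 0 := eq_zero_of_ne_zero_of_mul_right_eq_zero
    (pow_ne_zero 2 (sub_ne_zero.mpr (Ne.symm hwz))) hs
  have hd' : x - y = 0 := eq_zero_of_ne_zero_of_mul_right_eq_zero
    (pow_ne_zero 2 fun h ↦ hwz' (by linear_combination h)) hd
  have hx : x = 0 := eq_zero_of_ne_zero_of_mul_left_eq_zero h₂ (by linear_combination hs' + hd')
  have hy : y = 0 := eq_zero_of_ne_zero_of_mul_left_eq_zero h₂ (by linear_combination hs' - hd')
  exact absurd (by rw [hx, hy, h.u_eq_zero_of_x_eq_zero_of_y_eq_zero h₂ h₅ hx hy hz hw]) hxyu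

theorem isSingularF₁_iff (h₂ : (2 : K) ≠ 0) (h₅ : (5 : K) ≠ 0)
    (hxyu : (x, y, u) ≠ (0, 0, 0)) (hzw : (z, w) ≠ (0, 0)) :
    IsSingularF₁ x y u z w ↔
      u = 0 ∧ (x * y = 0 ∧ z * w = 0 ∨ y = x ∧ w = z ∨ y = -x ∧ w = -z) :=
  ⟨fun h ↦ h.u_eq_zero_and h₂ h₅ hxyu hzw, fun ⟨hu, h⟩ ↦ isSingularF₁_of_u_eq_zero hu h⟩

theorem exists_scaled_six_points_iff (hxyu : (x, y, u) ≠ (0, 0, 0)) (hzw : (z, w) ≠ (0, 0)) :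
    (∃ l m : K, l ≠ 0 ∧ m ≠ 0 ∧
      (((x, y, u) = (l * 1, l * 0, l * 0) ∧ (z, w) = (m * 1, m * 0)) ∨
       ((x, y, u) = (l * 0, l * 1, l * 0) ∧ (z, w) = (m * 1, m * 0)) ∨
       ((x, y, u) = (l * 1, l * 0, l * 0) ∧ (z, w) = (m * 0, m * 1)) ∨
       ((x, y, u) = (l * 0, l * 1, l * 0) ∧ (z, w) = (m * 0, m * 1)) ∨
       ((x, y, u) = (l * 1, l * 1, l * 0) ∧ (z, w) = (m * 1, m * 1)) ∨
       ((x, y, u) = (l * 1, l * (-1), l * 0) ∧ (z, w) = (m * 1, m * (-1))))) ↔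
      u = 0 ∧ (x * y = 0 ∧ z * w = 0 ∨ y = x ∧ w = z ∨ y = -x ∧ w = -z) := by
  constructor
  · rintro ⟨l, m, -, -, h⟩
    simp only [Prod.mk.injEq] at h
    rcases h with ⟨⟨rfl, rfl, rfl⟩, rfl, rfl⟩ | ⟨⟨rfl, rfl, rfl⟩, rfl, rfl⟩ |
      ⟨⟨rfl, rfl, rfl⟩, rfl, rfl⟩ | ⟨⟨rfl, rfl, rfl⟩, rfl, rfl⟩ |
      ⟨⟨rfl, rfl, rfl⟩, rfl, rfl⟩ | ⟨⟨rfl, rfl, rfl⟩, rfl, rfl⟩ <;> simp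
  · rintro ⟨rfl, ⟨hxy, hzw'⟩ | ⟨rfl, rfl⟩ | ⟨rfl, rfl⟩⟩
    on_goal 1 =>
      rcases mul_eq_zero.mp hxy with rfl | rfl <;> rcases mul_eq_zero.mp hzw' with rfl | rfl
    all_goals
      simp only [ne_eq, Prod.mk.injEq, neg_eq_zero, and_self, true_and, and_true] at hxyu hzw
      exact ⟨_, _, hxyu, hzw, by simp [hxyu, hzw]⟩

/-- The surface `S₁ = V(F₁) ⊂ ℙ² × ℙ¹`, with
`F₁ = u²z⁴ − xyz³w + (x² + y² − 3u²)z²w² − xyzw³ + u²w⁴`, has exactly six singular points: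
`(1:0:0, 1:0)`, `(0:1:0, 1:0)`, `(1:0:0, 0:1)`, `(0:1:0, 0:1)`,
`(1:1:0, 1:1)`, `(1:−1:0, 1:−1)`. -/
theorem S1_singular_points (x y u z w : ℂ)
    (hxyu : (x, y, u) ≠ (0, 0, 0)) (hzw : (z, w) ≠ (0, 0)) :
    (-(y * z ^ 3 * w) + 2 * x * z ^ 2 * w ^ 2 - y * z * w ^ 3 = 0 ∧
     -(x * z ^ 3 * w) + 2 * y * z ^ 2 * w ^ 2 - x * z * w ^ 3 = 0 ∧
     2 * u * z ^ 4 - 6 * u * z ^ 2 * w ^ 2 + 2 * u * w ^ 4 = 0 ∧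
     4 * u ^ 2 * z ^ 3 - 3 * x * y * z ^ 2 * w +
       2 * (x ^ 2 + y ^ 2 - 3 * u ^ 2) * z * w ^ 2 - x * y * w ^ 3 = 0 ∧
     -(x * y * z ^ 3) + 2 * (x ^ 2 + y ^ 2 - 3 * u ^ 2) * z ^ 2 * w -
       3 * x * y * z * w ^ 2 + 4 * u ^ 2 * w ^ 3 = 0) ↔
    (∃ l m : ℂ, l ≠ 0 ∧ m ≠ 0 ∧
      (((x, y, u) = (l * 1, l * 0, l * 0) ∧ (z, w) = (m * 1, m * 0)) ∨
       ((x, y, u) = (l * 0, l * 1, l * 0) ∧ (z, w) = (m * 1, m * 0)) ∨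
       ((x, y, u) = (l * 1, l * 0, l * 0) ∧ (z, w) = (m * 0, m * 1)) ∨
       ((x, y, u) = (l * 0, l * 1, l * 0) ∧ (z, w) = (m * 0, m * 1)) ∨
       ((x, y, u) = (l * 1, l * 1, l * 0) ∧ (z, w) = (m * 1, m * 1)) ∨
       ((x, y, u) = (l * 1, l * (-1), l * 0) ∧ (z, w) = (m * 1, m * (-1))))) :=
  (isSingularF₁_iff two_ne_zero (by norm_num) hxyu hzw).trans
    (exists_scaled_six_points_iff hxyu hzw).symm
end

section
/- The conic bundle φ₁ : S₁ → ℙ¹ has exactly eight degenerate fibers, located at (z:w) = (1:0), (0:1), (1:1), (1:−1), (1:(√5+1)/2), (1:(√5−1)/2), (1:−(√5+1)/2), (1:−(√5−1)/2). Precisely: for (z₀,w₀) ∈ ℂ² ∖ {0}, there exists a nonzero (x,y,u) ∈ ℂ³ at which the three partial derivatives ∂F₁/∂x, ∂F₁/∂y, ∂F₁/∂u all vanish at (x,y,u,z₀,w₀) if and only if z₀·w₀·(z₀² − w₀²)·(z₀⁴ − 3z₀²w₀² + w₀⁴) = 0. -/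
/-!
The three equations are the gradient `H v` of the quadratic form `F₁(·, ·, ·, z₀, w₀)`, where
`H` is its Hessian, so the fiber is degenerate iff `det H = 0`. `H` is block diagonal with blocks
`zw [[2zw, -(z² + w²)], [-(z² + w²), 2zw]]` and `2(z⁴ − 3z²w² + w⁴)`, whence
`det H = −2 Q P` with `P = Q (z⁴ − 3z²w² + w⁴)` the stated product and `Q = zw(z² − w²)`;
since `Q` divides `P`, `det H` vanishes exactly where `P` does.
-/

open Matrix

theorem Matrix.exists_ne_zero_mulVec_vec3_eq_zero_iff {A : Type*} [CommRing A] [IsDomain A]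
    (M : Matrix (Fin 3) (Fin 3) A) :
    (∃ x y u : A, (x, y, u) ≠ (0, 0, 0) ∧ M *ᵥ ![x, y, u] = 0) ↔ M.det = 0 := by
  rw [← exists_mulVec_eq_zero_iff]
  constructor
  · rintro ⟨x, y, u, hne, hM⟩
    refine ⟨![x, y, u], fun h => hne ?_, hM⟩
    simp only [Prod.mk.injEq]
    exact ⟨congrFun h 0, congrFun h 1, congrFun h 2⟩
  · rintro ⟨v, hv, hM⟩
    have hv_eta : v = ![v 0, v 1, v 2] := by
      ext i; fin_cases i <;> rfl
    refine ⟨v 0, v 1, v 2, fun h => hv ?_, hv_eta ▸ hM⟩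
    simp only [Prod.mk.injEq] at h
    rw [hv_eta, h.1, h.2.1, h.2.2]
    simp

section ConicFiber

variable {R : Type*} [CommRing R]

def conicFiberHessian (z w : R) : Matrix (Fin 3) (Fin 3) R :=
  !![2 * z ^ 2 * w ^ 2, -(z ^ 3 * w + z * w ^ 3), 0;
     -(z ^ 3 * w + z * w ^ 3), 2 * z ^ 2 * w ^ 2, 0;
     0, 0, 2 * (z ^ 4 - 3 * z ^ 2 * w ^ 2 + w ^ 4)]

theorem conicFiberHessian_mulVec (z w x y u : R) :
    conicFiberHessian z w *ᵥ ![x, y, u] =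
      ![-(y * z ^ 3 * w) + 2 * x * z ^ 2 * w ^ 2 - y * z * w ^ 3,
        -(x * z ^ 3 * w) + 2 * y * z ^ 2 * w ^ 2 - x * z * w ^ 3,
        2 * u * z ^ 4 - 6 * u * z ^ 2 * w ^ 2 + 2 * u * w ^ 4] := by
  ext i
  fin_cases i <;>
    simp only [mulVec, dotProduct, conicFiberHessian, Fin.sum_univ_three, of_apply, cons_val',
      cons_val_fin_one, cons_val_zero, cons_val_one, cons_val, Fin.zero_eta, Fin.mk_one,
      Fin.reduceFinMk, Fin.isValue, zero_mul, add_zero, zero_add] <;>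
    ring

theorem conicFiberHessian_det (z w : R) :
    (conicFiberHessian z w).det =
      -2 * (z * w * (z ^ 2 - w ^ 2)) *
        (z * w * (z ^ 2 - w ^ 2) * (z ^ 4 - 3 * z ^ 2 * w ^ 2 + w ^ 4)) := by
  simp only [conicFiberHessian, det_fin_three, of_apply, cons_val', cons_val_zero, cons_val_one,
    cons_val, cons_val_fin_one, Fin.isValue, mul_zero, sub_zero, add_zero, zero_mul]
  ring

theorem conicFiberHessian_det_eq_zero_iff [IsDomain R] [NeZero (2 : R)] (z w : R) :
    (conicFiberHessian z w).det = 0 ↔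
      z * w * (z ^ 2 - w ^ 2) * (z ^ 4 - 3 * z ^ 2 * w ^ 2 + w ^ 4) = 0 := by
  rw [conicFiberHessian_det, mul_eq_zero, mul_eq_zero, or_iff_right (neg_ne_zero.mpr two_ne_zero)]
  exact or_iff_right_of_imp fun hQ => by rw [hQ, zero_mul]

end ConicFiber

theorem S1_degenerate_fibers_general (z₀ w₀ : ℂ) :
    (∃ x y u : ℂ, (x, y, u) ≠ (0, 0, 0) ∧
      -(y * z₀ ^ 3 * w₀) + 2 * x * z₀ ^ 2 * w₀ ^ 2 - y * z₀ * w₀ ^ 3 = 0 ∧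
      -(x * z₀ ^ 3 * w₀) + 2 * y * z₀ ^ 2 * w₀ ^ 2 - x * z₀ * w₀ ^ 3 = 0 ∧
      2 * u * z₀ ^ 4 - 6 * u * z₀ ^ 2 * w₀ ^ 2 + 2 * u * w₀ ^ 4 = 0) ↔
    z₀ * w₀ * (z₀ ^ 2 - w₀ ^ 2) * (z₀ ^ 4 - 3 * z₀ ^ 2 * w₀ ^ 2 + w₀ ^ 4) = 0 := by
  rw [← conicFiberHessian_det_eq_zero_iff,
    ← (conicFiberHessian z₀ w₀).exists_ne_zero_mulVec_vec3_eq_zero_iff]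
  simp only [conicFiberHessian_mulVec, cons_eq_zero_iff, zero_empty, and_true]

/-- The conic bundle `φ₁ : S₁ → ℙ¹` (with
`F₁ = u²z⁴ − xyz³w + (x² + y² − 3u²)z²w² − xyzw³ + u²w⁴`) has exactly eight degenerate
fibers, at `(z:w) = (1:0), (0:1), (1:±1), (1:±(√5±1)/2)`: the fiber over `(z₀:w₀)` is
degenerate iff `z₀w₀(z₀² − w₀²)(z₀⁴ − 3z₀²w₀² + w₀⁴) = 0`. -/
theorem S1_degenerate_fibers (z₀ w₀ : ℂ) (hzw : (z₀, w₀) ≠ (0, 0)) :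
    (∃ x y u : ℂ, (x, y, u) ≠ (0, 0, 0) ∧
      -(y * z₀ ^ 3 * w₀) + 2 * x * z₀ ^ 2 * w₀ ^ 2 - y * z₀ * w₀ ^ 3 = 0 ∧
      -(x * z₀ ^ 3 * w₀) + 2 * y * z₀ ^ 2 * w₀ ^ 2 - x * z₀ * w₀ ^ 3 = 0 ∧
      2 * u * z₀ ^ 4 - 6 * u * z₀ ^ 2 * w₀ ^ 2 + 2 * u * w₀ ^ 4 = 0) ↔
    z₀ * w₀ * (z₀ ^ 2 - w₀ ^ 2) * (z₀ ^ 4 - 3 * z₀ ^ 2 * w₀ ^ 2 + w₀ ^ 4) = 0 :=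
  S1_degenerate_fibers_general z₀ w₀
end

section
/- Let α := (−1 + √−7)/2 ∈ ℂ (so α² + α + 2 = 0), and let A = [[1,1],[0,1]] and B = [[1,0],[α,1]] in SL₂(ℂ). Set W := B·A·B⁻¹·A⁻¹·B·A·B·A⁻¹·B⁻¹·A·B (the image of the word w = baBAbabABab). Then: (i) A·W = W·A, so a ↦ A, b ↦ B defines a representation of the link group ⟨a, b | awa⁻¹w⁻¹ = 1⟩ of 6²₃ into SL₂(ℂ); (ii) tr(A) = 2, tr(B) = 2, and tr(A·B) = 2 + α; (iii) the character point (x,y,z) = (2, 2, 2+α) satisfies p₂(2, 2, 2+α) = 0 but r(2, 2, 2+α) ≠ 0; hence the holonomy character of 6²₃ lies on the component V(p₂) and not on V(r). -/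
open Matrix

/-! `A = [[1,1],[0,1]]` commutes with every matrix `[[a,b],[0,a]]`, and `W` has this shape because
its diagonal entries agree and its lower-left entry has the factor `α² + α + 2`. At `x = y = 2`,
`p₂ = (z - 1)(z² - 3z + 4)`, and at `z = 2 + α` the second factor is `α² + α + 2`; meanwhile
`r = α² + 1 = (α² + α + 2) - (α + 1)`, which vanishes only if `α = -1`, forcing `2 = 0`. -/

section

variable {R : Type*} [CommRing R]

theorem inv_upper_unipotent (t : R) : (!![1, t; 0, 1])⁻¹ = !![1, -t; 0, 1] :=
  inv_eq_right_inv <| by simp [one_fin_two]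

theorem inv_lower_unipotent (s : R) : (!![1, 0; s, 1])⁻¹ = !![1, 0; -s, 1] :=
  inv_eq_right_inv <| by simp [one_fin_two]

theorem commute_upper_unipotent (a b : R) :
    Commute !![(1 : R), 1; 0, 1] !![a, b; 0, a] := by
  simp [Commute, SemiconjBy, add_comm]

theorem word_623_eq (α : R) :
    let A : Matrix (Fin 2) (Fin 2) R := !![1, 1; 0, 1]
    let B : Matrix (Fin 2) (Fin 2) R := !![1, 0; α, 1]
    B * A * B⁻¹ * A⁻¹ * B * A * B * A⁻¹ * B⁻¹ * A * B =
      !![1 + α + α ^ 2 + 2 * α ^ 3 + α ^ 4 + α ^ 5, 1 + α ^ 2 + α ^ 4;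
        α * (α ^ 3 + α ^ 2 + α + 1) * (α ^ 2 + α + 2),
        1 + α + α ^ 2 + 2 * α ^ 3 + α ^ 4 + α ^ 5] := by
  intro A B
  simp only [A, B, inv_upper_unipotent, inv_lower_unipotent, mul_fin_two]
  ext i j
  fin_cases i <;> fin_cases j <;>
    simp only [of_apply, cons_val', cons_val_zero, cons_val_one, cons_val_fin_one, Fin.zero_eta,
      Fin.mk_one, Fin.isValue] <;>
    ring

theorem p2_at_two_two_eq_zero {α : R} (hα : α ^ 2 + α + 2 = 0) :
    (2 + α) ^ 3 - 2 * 2 * (2 + α) ^ 2 + ((2 : R) ^ 2 + 2 ^ 2 - 1) * (2 + α) - 2 * 2 = 0 := by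
  linear_combination (α + 1) * hα

theorem r_at_two_two_ne_zero {α : R} (hα : α ^ 2 + α + 2 = 0) (h2 : (2 : R) ≠ 0) :
    (2 : R) ^ 2 + 2 ^ 2 + (2 + α) ^ 2 - 2 * 2 * (2 + α) - 3 ≠ 0 := by
  intro hr
  exact h2 (by linear_combination (1 - α) * hα + α * hr)

end

theorem sq_add_self_add_two_eq_zero {α : ℂ} (hα : α = (-1 + Complex.I * Real.sqrt 7) / 2) :
    α ^ 2 + α + 2 = 0 := by
  have h7 : ((Real.sqrt 7 : ℝ) : ℂ) ^ 2 = 7 := by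
    norm_cast
    exact Real.sq_sqrt (by norm_num)
  rw [hα]
  linear_combination ((Real.sqrt 7 : ℂ) ^ 2 / 4) * Complex.I_sq - h7 / 4

/-- The holonomy representation of the link `6²₃`: with `α = (−1 + √−7)/2`,
`A = [[1,1],[0,1]]`, `B = [[1,0],[α,1]]` and
`W = B·A·B⁻¹·A⁻¹·B·A·B·A⁻¹·B⁻¹·A·B` (the image of `w = baBAbabABab`):
(i) `A·W = W·A`, so `a ↦ A`, `b ↦ B` defines a representation of
`⟨a, b | awa⁻¹w⁻¹⟩` into `SL₂(ℂ)`;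
(ii) `tr A = 2`, `tr B = 2`, `tr (A·B) = 2 + α`;
(iii) the character point `(2, 2, 2 + α)` satisfies `p₂(2,2,2+α) = 0` and
`r(2,2,2+α) ≠ 0`, hence the holonomy character lies on `V(p₂)` and not on `V(r)`. -/
theorem holonomy_623 (α : ℂ) (hα : α = (-1 + Complex.I * Real.sqrt 7) / 2)
    (A B W : Matrix (Fin 2) (Fin 2) ℂ)
    (hA : A = !![1, 1; 0, 1]) (hB : B = !![1, 0; α, 1])
    (hW : W = B * A * B⁻¹ * A⁻¹ * B * A * B * A⁻¹ * B⁻¹ * A * B) :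
    α ^ 2 + α + 2 = 0 ∧
    A * W = W * A ∧
    Matrix.trace A = 2 ∧ Matrix.trace B = 2 ∧ Matrix.trace (A * B) = 2 + α ∧
    (2 + α) ^ 3 - 2 * 2 * (2 + α) ^ 2 +
      ((2 : ℂ) ^ 2 + 2 ^ 2 - 1) * (2 + α) - 2 * 2 = 0 ∧
    (2 : ℂ) ^ 2 + 2 ^ 2 + (2 + α) ^ 2 - 2 * 2 * (2 + α) - 3 ≠ 0 := by
  have hα₂ : α ^ 2 + α + 2 = 0 := sq_add_self_add_two_eq_zero hα
  subst hA hB hW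
  refine ⟨hα₂, ?_, by norm_num [trace_fin_two_of], by norm_num [trace_fin_two_of],
    by simp [trace_fin_two_of]; ring, p2_at_two_two_eq_zero hα₂,
    r_at_two_two_ne_zero hα₂ two_ne_zero⟩
  rw [word_623_eq, hα₂, mul_zero]
  exact (commute_upper_unipotent _ _).eq
end
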